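/- arXiv:2207.01537 — 4 statements merged into one kernel-verified Lean document; each statement's English description precedes it below -/
import Mathlib

section
/- In a timed network whose guards only involve integer constants at most M, if there exists a trajectory from (s,0) reaching target vertex t at some date, then there exists such a trajectory reaching t at a date at most M + |V|, where |V| is the number of vertices. -/
/-- `p 0, p 1, …, p l` is a trajectory in the timed network with edges `E`
and guards `guard`. -/
def IsTraj {V : Type} (E : V → V → Prop) (guard : V → V → Set ℕ)
    (p : ℕ → V × ℕ) (l : ℕ) : Prop :=
  ∀ j < l, E (p j).1 (p (j+1)).1 ∧ (p (j+1)).2 ∈ guard (p j).1 (p (j+1)).1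

/-- In a timed network whose guards only involve integer constants at most `M`
(formalized as: beyond `M`, guards are date-independent), if some trajectory
from `(s,0)` reaches `t`, then some trajectory from `(s,0)` reaches `t` at a
date at most `M + |V|`. -/
theorem bounded_reaching_trajectory {V : Type} [Fintype V]
    (E : V → V → Prop) (guard : V → V → Set ℕ) (M : ℕ)
    (hup : ∀ u v d d', M ≤ d → d ∈ guard u v → M ≤ d' → d' ∈ guard u v)
    (s t : V)
    (h : ∃ (l : ℕ) (p : ℕ → V × ℕ), IsTraj E guard p l ∧ p 0 = (s, 0) ∧ (p l).1 = t) :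
    ∃ (l : ℕ) (p : ℕ → V × ℕ), IsTraj E guard p l ∧ p 0 = (s, 0) ∧ (p l).1 = t ∧
      (p l).2 ≤ M + Fintype.card V := by
  obtain ⟨l, p, htraj, h0, ht⟩ := h
  refine ⟨l, fun j => ((p j).1, min (p j).2 M), ?_, ?_, ?_, ?_⟩
  · intro j hj
    obtain ⟨he, hg⟩ := htraj j hj
    refine ⟨he, ?_⟩
    simp only
    rcases le_or_gt (p (j+1)).2 M with hle | hlt
    · rwa [min_eq_left hle]
    · rw [min_eq_right hlt.le]
      exact hup _ _ _ _ hlt.le hg le_rfl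
  · simp [h0]
  · exact ht
  · simp only
    exact le_trans (min_le_right _ _) (Nat.le_add_right _ _)
end

section
/- A play ρ = (s_k, a_k, s'_k)_{k∈ℕ} from the initial state in the finite concurrent game associated with a timed network game is the outcome of some Nash equilibrium if and only if for every player i, every index k, and every action b_i allowed for player i at s_k, if player i has not yet visited their target along the prefix ρ_{<k}, then cost_i(ρ_{≥k}) ≤ Val_i(s') + cost_i(s_k, (a_{k,-i}, b_i), s'), where s' = Update(s_k, (a_{k,-i}, b_i)) and Val_i(s') = sup over strategies σ_{-i} of the coalition of all other players of the infimum over strategies σ_i of player i of cost_i of the resulting outcome from s'. -/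
/-!
If `σ` is a Nash equilibrium with outcome `ρ` and player `i` has not reached its target by step
`k`, then `i` may play `b` at step `k` and afterwards a best response to what the others still
play from `s'`; that response costs at most `Val_i(s')`, so the deviation costs at most the cost
of `ρ_{<k}` plus `cost_i(s_k, (a_{k,-i}, b), s') + Val_i(s')`, and the equilibrium inequality
with the common prefix cancelled is the condition.

Conversely, let every player follow `ρ` and, after the first step where the play leaves `ρ`
through a unilateral deviation of `i` into `s'`, switch to an optimal punishing profile against
`i` from `s'`. A deviation of `i` at step `k` then costs `i` at least the prefix cost plus
`cost_i(s_k, (a_{k,-i}, b), s') + Val_i(s')`, which by the condition is at least the cost of `ρ`;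
if `i` has already reached its target by step `k` the deviation does not change its cost.
-/

open scoped Classical

/-- An `n`-player concurrent game: states, actions, allowed actions per player,
and a deterministic update function. -/
structure CGame (n : ℕ) where
  State : Type
  Act : Type
  allowed : Fin n → State → Set Act
  update : State → (Fin n → Act) → State

namespace CGame

variable {n : ℕ} (G : CGame n)

/-- A play: an infinite sequence of (state, action vector). -/
abbrev Play := ℕ → G.State × (Fin n → G.Act)

/-- A play is valid: actions are allowed and states are updated consistently. -/
def IsPlay (ρ : G.Play) : Prop :=
  ∀ k, (∀ i, (ρ k).2 i ∈ G.allowed i (ρ k).1) ∧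
    (ρ (k+1)).1 = G.update (ρ k).1 (ρ k).2

/-- Histories. -/
abbrev Hist := List (G.State × (Fin n → G.Act))

/-- Strategies map histories to actions. -/
abbrev Strategy := G.Hist → G.Act

/-- Last state of a history from `s₀`. -/
noncomputable def lastState (s₀ : G.State) (h : G.Hist) : G.State :=
  match h.getLast? with
  | none => s₀
  | some p => G.update p.1 p.2

/-- `σ` is a valid strategy for player `i` from `s₀`. -/
def IsStrategy (i : Fin n) (s₀ : G.State) (σ : G.Strategy) : Prop :=
  ∀ h : G.Hist, σ h ∈ G.allowed i (G.lastState s₀ h)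

/-- Run of a strategy profile from `s₀`. -/
noncomputable def run (σ : Fin n → G.Strategy) (s₀ : G.State) :
    ℕ → G.State × G.Hist
  | 0 => (s₀, [])
  | k+1 =>
      (G.update (run σ s₀ k).1 (fun i => σ i (run σ s₀ k).2),
       (run σ s₀ k).2 ++ [((run σ s₀ k).1, fun i => σ i (run σ s₀ k).2)])

/-- Outcome of a strategy profile from `s₀`, as a play. -/
noncomputable def outcome (σ : Fin n → G.Strategy) (s₀ : G.State) : G.Play :=
  fun k => ((G.run σ s₀ k).1, fun i => σ i (G.run σ s₀ k).2)

/-- Nash equilibrium from `s₀`, for given cost functions on plays. -/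
def IsNE (cost : Fin n → G.Play → ℕ∞) (σ : Fin n → G.Strategy) (s₀ : G.State) :
    Prop :=
  (∀ i, G.IsStrategy i s₀ (σ i)) ∧
  ∀ i τ, G.IsStrategy i s₀ τ →
    cost i (G.outcome σ s₀) ≤ cost i (G.outcome (Function.update σ i τ) s₀)

end CGame

namespace CGame

variable {n : ℕ} (G : CGame n)

/-- Cost of a play for player `i`: sum of per-transition costs `tc` until the
first visit of player `i`'s target (`⊤` if the target is never visited). -/
noncomputable def playCost (tc : Fin n → G.State → (Fin n → G.Act) → ℕ)
    (tgt : Fin n → G.State → Prop) (i : Fin n) (ρ : G.Play) : ℕ∞ :=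
  if h : ∃ k, tgt i (ρ k).1 then
    ((∑ k ∈ Finset.range (Nat.find h), tc i (ρ k).1 (ρ k).2 : ℕ) : ℕ∞)
  else ⊤

/-- The lower value for player `i` at state `s`: sup over strategies of the
coalition of the other players of the inf over player-`i` strategies of the
cost of the resulting outcome from `s`. -/
noncomputable def Val (tc : Fin n → G.State → (Fin n → G.Act) → ℕ)
    (tgt : Fin n → G.State → Prop) (i : Fin n) (s : G.State) : ℕ∞ :=
  ⨆ (σ : Fin n → G.Strategy) (_ : ∀ j, G.IsStrategy j s (σ j)),
    ⨅ (τ : G.Strategy) (_ : G.IsStrategy i s τ),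
      G.playCost tc tgt i (G.outcome (Function.update σ i τ) s)

end CGame

namespace CGame

variable {n : ℕ} {G : CGame n}

theorem lastState_append_singleton (s₀ : G.State) (h : G.Hist)
    (p : G.State × (Fin n → G.Act)) :
    G.lastState s₀ (h ++ [p]) = G.update p.1 p.2 := by
  simp [lastState]

theorem lastState_append (s₀ : G.State) (h₁ h₂ : G.Hist) :
    G.lastState s₀ (h₁ ++ h₂) = G.lastState (G.lastState s₀ h₁) h₂ := by
  induction h₂ using List.reverseRecOn with
  | nil => simp [lastState]
  | append_singleton l p _ =>
    rw [← List.append_assoc, lastState_append_singleton, lastState_append_singleton]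

def jointAction (π : Fin n → G.Strategy) (h : G.Hist) : Fin n → G.Act := fun j => π j h

theorem jointAction_update (π : Fin n → G.Strategy) (i : Fin n) (τ : G.Strategy) (h : G.Hist) :
    jointAction (Function.update π i τ) h = Function.update (jointAction π h) i (τ h) := by
  funext j
  by_cases hj : j = i
  · subst hj; simp [jointAction]
  · simp [jointAction, hj]

def residual (H : G.Hist) (σ : G.Strategy) : G.Strategy := fun h => σ (H ++ h)

theorem isStrategy_residual {i : Fin n} {s₀ : G.State} {σ : G.Strategy}
    (hσ : G.IsStrategy i s₀ σ) (H : G.Hist) :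
    G.IsStrategy i (G.lastState s₀ H) (residual H σ) := fun h => by
  rw [← lastState_append]
  exact hσ _

theorem IsStrategy.update {i : Fin n} {s₀ : G.State} {σ : G.Strategy} {h : G.Hist} {b : G.Act}
    (hσ : G.IsStrategy i s₀ σ) (hb : b ∈ G.allowed i (G.lastState s₀ h)) :
    G.IsStrategy i s₀ (Function.update σ h b) := fun h' => by
  by_cases hh : h' = h
  · subst hh; simpa using hb
  · rw [Function.update_of_ne hh]; exact hσ h'

noncomputable def switchAt (H : G.Hist) (σ τ : G.Strategy) : G.Strategy := fun h =>
  if H <+: h then τ (h.drop H.length) else σ h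

theorem switchAt_append (H t : G.Hist) (σ τ : G.Strategy) : switchAt H σ τ (H ++ t) = τ t := by
  simp [switchAt]

theorem residual_switchAt (H : G.Hist) (σ τ : G.Strategy) : residual H (switchAt H σ τ) = τ :=
  funext (switchAt_append H · σ τ)

theorem switchAt_of_not_prefix {H h : G.Hist} (hH : ¬ H <+: h) (σ τ : G.Strategy) :
    switchAt H σ τ h = σ h :=
  if_neg hH

theorem isStrategy_switchAt {i : Fin n} {s₀ : G.State} {H : G.Hist} {σ τ : G.Strategy}
    (hσ : G.IsStrategy i s₀ σ) (hτ : G.IsStrategy i (G.lastState s₀ H) τ) :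
    G.IsStrategy i s₀ (switchAt H σ τ) := fun h => by
  by_cases hH : H <+: h
  · obtain ⟨t, rfl⟩ := hH
    rw [switchAt_append, lastState_append]
    exact hτ t
  · rw [switchAt_of_not_prefix hH]; exact hσ h

theorem run_succ (π : Fin n → G.Strategy) (s₀ : G.State) (k : ℕ) :
    G.run π s₀ (k + 1) =
      (G.update (G.run π s₀ k).1 (jointAction π (G.run π s₀ k).2),
        (G.run π s₀ k).2 ++ [((G.run π s₀ k).1, jointAction π (G.run π s₀ k).2)]) :=
  rfl

theorem run_add (π : Fin n → G.Strategy) (s₀ : G.State) (K m : ℕ) :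
    G.run π s₀ (K + m) =
      ((G.run (residual (G.run π s₀ K).2 ∘ π) (G.run π s₀ K).1 m).1,
        (G.run π s₀ K).2 ++
          (G.run (residual (G.run π s₀ K).2 ∘ π) (G.run π s₀ K).1 m).2) := by
  induction m with
  | zero => simp [run]
  | succ m ih => rw [← add_assoc, run, ih]; simp [run, residual]

theorem outcome_add (π : Fin n → G.Strategy) (s₀ : G.State) (K m : ℕ) :
    G.outcome π s₀ (K + m) =
      G.outcome (residual (G.run π s₀ K).2 ∘ π) (G.run π s₀ K).1 m := by
  simp only [outcome, run_add]
  rfl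

def hist (ρ : G.Play) (k : ℕ) : G.Hist := (List.range k).map ρ

@[simp]
theorem length_hist (ρ : G.Play) (k : ℕ) : (hist ρ k).length = k := by
  simp [hist]

theorem hist_succ (ρ : G.Play) (k : ℕ) : hist ρ (k + 1) = hist ρ k ++ [ρ k] := by
  simp [hist, List.range_succ]

theorem getElem?_hist_append {ρ : G.Play} {m k : ℕ} (hm : m < k) (l : G.Hist) :
    (hist ρ k ++ l)[m]? = some (ρ m) := by
  rw [List.getElem?_append_left (by simpa using hm)]
  simp [hist, hm]

theorem getElem?_hist_append_cons (ρ : G.Play) (m : ℕ) (x : G.State × (Fin n → G.Act))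
    (t : G.Hist) : (hist ρ m ++ x :: t)[m]? = some x := by
  simp

theorem lastState_hist {ρ : G.Play} {s₀ : G.State} (hρ : G.IsPlay ρ) (hρ0 : (ρ 0).1 = s₀)
    (k : ℕ) : G.lastState s₀ (hist ρ k) = (ρ k).1 := by
  cases k with
  | zero => simp [hist, lastState, hρ0]
  | succ k => rw [hist_succ, lastState_append_singleton, (hρ k).2]

theorem run_snd (π : Fin n → G.Strategy) (s₀ : G.State) (k : ℕ) :
    (G.run π s₀ k).2 = hist (G.outcome π s₀) k := by
  induction k with
  | zero => rfl
  | succ k ih => rw [hist_succ, ← ih]; rfl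

def FollowsUpTo (π : Fin n → G.Strategy) (ρ : G.Play) (k : ℕ) : Prop :=
  ∀ m < k, jointAction π (hist ρ m) = (ρ m).2

theorem followsUpTo_update {π : Fin n → G.Strategy} {ρ : G.Play} {k : ℕ} {i : Fin n}
    {τ : G.Strategy} (hπ : FollowsUpTo π ρ k) (hτ : ∀ m < k, τ (hist ρ m) = (ρ m).2 i) :
    FollowsUpTo (Function.update π i τ) ρ k := fun m hm => by
  rw [jointAction_update, hπ m hm, hτ m hm, Function.update_eq_self]

theorem followsUpTo_of_outcome_eq {π : Fin n → G.Strategy} {s₀ : G.State} {ρ : G.Play}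
    (hout : ∀ m, G.outcome π s₀ m = ρ m) (k : ℕ) : FollowsUpTo π ρ k := fun m _ => by
  have hrun : (G.run π s₀ m).2 = hist ρ m := by rw [run_snd, funext hout]
  rw [← hrun, ← hout m]
  rfl

section FollowsUpTo

variable {π : Fin n → G.Strategy} {ρ : G.Play} {s₀ : G.State} {k : ℕ}

theorem run_eq_of_followsUpTo (hρ : G.IsPlay ρ) (hρ0 : (ρ 0).1 = s₀)
    (hπ : FollowsUpTo π ρ k) {m : ℕ} (hm : m ≤ k) :
    G.run π s₀ m = ((ρ m).1, hist ρ m) := by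
  induction m with
  | zero => subst hρ0; rfl
  | succ m ih =>
    rw [run_succ, ih (by omega), hπ m hm, hist_succ, (hρ m).2]

theorem outcome_eq_of_followsUpTo (hρ : G.IsPlay ρ) (hρ0 : (ρ 0).1 = s₀)
    (hπ : FollowsUpTo π ρ k) {m : ℕ} (hm : m ≤ k) :
    G.outcome π s₀ m = ((ρ m).1, jointAction π (hist ρ m)) := by
  simp only [outcome, run_eq_of_followsUpTo hρ hρ0 hπ hm]
  rfl

theorem outcome_eq_of_followsUpTo_of_lt (hρ : G.IsPlay ρ) (hρ0 : (ρ 0).1 = s₀)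
    (hπ : FollowsUpTo π ρ k) {m : ℕ} (hm : m < k) : G.outcome π s₀ m = ρ m := by
  rw [outcome_eq_of_followsUpTo hρ hρ0 hπ hm.le, hπ m hm]

theorem outcome_eq_of_forall_followsUpTo (hρ : G.IsPlay ρ) (hρ0 : (ρ 0).1 = s₀)
    (hπ : ∀ k, FollowsUpTo π ρ k) : G.outcome π s₀ = ρ :=
  funext fun m => outcome_eq_of_followsUpTo_of_lt hρ hρ0 (hπ (m + 1)) m.lt_succ_self

theorem run_succ_eq_of_followsUpTo (hρ : G.IsPlay ρ) (hρ0 : (ρ 0).1 = s₀)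
    (hπ : FollowsUpTo π ρ k) :
    G.run π s₀ (k + 1) = (G.update (ρ k).1 (jointAction π (hist ρ k)),
      hist ρ k ++ [((ρ k).1, jointAction π (hist ρ k))]) := by
  rw [run_succ, run_eq_of_followsUpTo hρ hρ0 hπ le_rfl]

end FollowsUpTo

section playCost

variable {tc : Fin n → G.State → (Fin n → G.Act) → ℕ} {tgt : Fin n → G.State → Prop}
  {i : Fin n}

theorem playCost_eq_sum_of_tgt {ρ : G.Play} {k : ℕ} (hk : tgt i (ρ k).1)
    (hlt : ∀ j < k, ¬ tgt i (ρ j).1) :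
    G.playCost tc tgt i ρ =
      ((∑ j ∈ Finset.range k, tc i (ρ j).1 (ρ j).2 : ℕ) : ℕ∞) := by
  rw [playCost, dif_pos ⟨k, hk⟩, (Nat.find_eq_iff _).2 ⟨hk, hlt⟩]

theorem playCost_eq_sum_add (ρ : G.Play) (k : ℕ) (hlt : ∀ j < k, ¬ tgt i (ρ j).1) :
    G.playCost tc tgt i ρ = ((∑ j ∈ Finset.range k, tc i (ρ j).1 (ρ j).2 : ℕ) : ℕ∞) +
      G.playCost tc tgt i (fun m => ρ (k + m)) := by
  by_cases hreach : ∃ m, tgt i (ρ m).1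
  · have hreach' : ∃ m, tgt i (ρ (k + m)).1 := by
      obtain ⟨m, hm⟩ := hreach
      have hkm : k ≤ m := not_lt.1 fun h => hlt m h hm
      exact ⟨m - k, by rwa [Nat.add_sub_cancel' hkm]⟩
    have hfind : Nat.find hreach = k + Nat.find hreach' := by
      refine (Nat.find_eq_iff _).2 ⟨Nat.find_spec hreach', fun m hm => ?_⟩
      by_cases hmk : m < k
      · exact hlt m hmk
      · obtain ⟨d, rfl⟩ := Nat.exists_eq_add_of_le (not_lt.1 hmk)
        exact Nat.find_min hreach' (by omega)
    simp only [playCost, dif_pos hreach, dif_pos hreach', hfind, Finset.sum_range_add,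
      Nat.cast_add]
  · have hreach' : ¬ ∃ m, tgt i (ρ (k + m)).1 := fun ⟨m, hm⟩ => hreach ⟨k + m, hm⟩
    simp only [playCost, dif_neg hreach, dif_neg hreach', add_top]

theorem playCost_eq_of_agree {ρ ρ' : G.Play} {k : ℕ} (hagree : ∀ m < k, ρ' m = ρ m)
    (hk : (ρ' k).1 = (ρ k).1) (hreach : ∃ j ≤ k, tgt i (ρ j).1) :
    G.playCost tc tgt i ρ' = G.playCost tc tgt i ρ := by
  have hE : ∃ j, tgt i (ρ j).1 := hreach.imp fun _ => And.right
  have hjk : Nat.find hE ≤ k := by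
    obtain ⟨j, hj, hjt⟩ := hreach
    exact (Nat.find_min' hE hjt).trans hj
  have hstate : ∀ m ≤ Nat.find hE, (ρ' m).1 = (ρ m).1 := fun m hm => by
    rcases (hm.trans hjk).lt_or_eq with hlt | rfl
    · rw [hagree m hlt]
    · exact hk
  rw [playCost_eq_sum_of_tgt (Nat.find_spec hE) fun m hm => Nat.find_min hE hm,
    playCost_eq_sum_of_tgt (k := Nat.find hE) (by rw [hstate _ le_rfl]; exact Nat.find_spec hE)
      fun m hm => by rw [hstate m hm.le]; exact Nat.find_min hE hm]
  refine congrArg _ (Finset.sum_congr rfl fun m hm => ?_)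
  rw [hagree m ((Finset.mem_range.1 hm).trans_le hjk)]

theorem playCost_outcome_of_followsUpTo {π : Fin n → G.Strategy} {ρ : G.Play} {s₀ : G.State}
    {k : ℕ} (hρ : G.IsPlay ρ) (hρ0 : (ρ 0).1 = s₀) (hπ : FollowsUpTo π ρ k)
    (hnt : ∀ j ≤ k, ¬ tgt i (ρ j).1) :
    G.playCost tc tgt i (G.outcome π s₀) =
      ((∑ j ∈ Finset.range k, tc i (ρ j).1 (ρ j).2 : ℕ) : ℕ∞) +
        (tc i (ρ k).1 (jointAction π (hist ρ k)) : ℕ∞) +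
        G.playCost tc tgt i
          (G.outcome (residual (hist ρ k ++ [((ρ k).1, jointAction π (hist ρ k))]) ∘ π)
            (G.update (ρ k).1 (jointAction π (hist ρ k)))) := by
  have hout {m : ℕ} (hm : m ≤ k) := outcome_eq_of_followsUpTo hρ hρ0 hπ hm
  rw [playCost_eq_sum_add _ (k + 1) fun j hj => by
      rw [hout (Nat.lt_succ_iff.1 hj)]; exact hnt j (Nat.lt_succ_iff.1 hj),
    Finset.sum_range_succ, hout le_rfl, funext (outcome_add π s₀ (k + 1)),
    run_succ_eq_of_followsUpTo hρ hρ0 hπ, Nat.cast_add]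
  congr 3
  refine Finset.sum_congr rfl fun m hm => ?_
  rw [outcome_eq_of_followsUpTo_of_lt hρ hρ0 hπ (Finset.mem_range.1 hm)]

theorem exists_playCost_le_Val {s : G.State} {σ : Fin n → G.Strategy} {τ₀ : G.Strategy}
    (hσ : ∀ j, G.IsStrategy j s (σ j)) (hτ₀ : G.IsStrategy i s τ₀) :
    ∃ τ, G.IsStrategy i s τ ∧
      G.playCost tc tgt i (G.outcome (Function.update σ i τ) s) ≤ G.Val tc tgt i s := by
  have : Nonempty {τ // G.IsStrategy i s τ} := ⟨⟨τ₀, hτ₀⟩⟩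
  obtain ⟨⟨τ, hτ⟩, hmin⟩ := ciInf_mem fun τ : {τ // G.IsStrategy i s τ} =>
    G.playCost tc tgt i (G.outcome (Function.update σ i τ.1) s)
  refine ⟨τ, hτ, hmin.le.trans ?_⟩
  exact le_iSup₂_of_le σ hσ (le_iInf₂ fun τ' hτ' => iInf_le_of_le ⟨τ', hτ'⟩ le_rfl)

end playCost

def LeavesAt (ρ : G.Play) (h : G.Hist) (p : ℕ × (G.State × (Fin n → G.Act)) × G.Hist) :
    Prop :=
  h = hist ρ p.1 ++ p.2.1 :: p.2.2 ∧ p.2.1 ≠ ρ p.1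

theorem LeavesAt.unique {ρ : G.Play} {h : G.Hist}
    {p q : ℕ × (G.State × (Fin n → G.Act)) × G.Hist}
    (hp : LeavesAt ρ h p) (hq : LeavesAt ρ h q) : p = q := by
  obtain ⟨m, x, t⟩ := p
  obtain ⟨m', x', t'⟩ := q
  obtain ⟨rfl, hx⟩ := hp
  obtain ⟨heq, hx'⟩ := hq
  have hm : m = m' := by
    rcases lt_trichotomy m m' with hlt | heq' | hgt
    · have := getElem?_hist_append_cons ρ m x t
      rw [heq, getElem?_hist_append hlt] at this
      exact absurd (Option.some_injective _ this).symm hx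
    · exact heq'
    · have := getElem?_hist_append_cons ρ m' x' t'
      rw [← heq, getElem?_hist_append hgt] at this
      exact absurd (Option.some_injective _ this).symm hx'
  subst hm
  obtain ⟨rfl, rfl⟩ := List.cons_eq_cons.1 (List.append_cancel_left heq)
  rfl

theorem not_leavesAt_hist (ρ : G.Play) (k : ℕ)
    (p : ℕ × (G.State × (Fin n → G.Act)) × G.Hist) :
    ¬ LeavesAt ρ (hist ρ k) p := by
  rintro ⟨heq, hx⟩
  have hlt : p.1 < k := by
    have := congrArg List.length heq
    simp only [length_hist, List.length_append, List.length_cons] at this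
    omega
  have := getElem?_hist_append_cons ρ p.1 p.2.1 p.2.2
  rw [← heq, ← List.append_nil (hist ρ k), getElem?_hist_append hlt] at this
  exact hx (Option.some_injective _ this).symm

theorem eq_hist_or_leavesAt (ρ : G.Play) (h : G.Hist) :
    h = hist ρ h.length ∨ ∃ p, LeavesAt ρ h p := by
  induction h using List.reverseRecOn with
  | nil => exact Or.inl rfl
  | append_singleton l y ih =>
    rcases ih with hl | ⟨⟨m, x, t⟩, hl, hx⟩
    · by_cases hy : y = ρ l.length
      · left
        rw [List.length_append, List.length_singleton, hist_succ, ← hl, hy]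
      · exact Or.inr ⟨(l.length, y, []), by rw [← hl], hy⟩
    · exact Or.inr ⟨(m, x, t ++ [y]), by simp [hl], hx⟩

noncomputable def deviator {α : Type*} (a b : Fin n → α) (j : Fin n) : Fin n :=
  if h : ∃ i, a i ≠ b i then h.choose else j

theorem deviator_update {α : Type*} {a : Fin n → α} {i : Fin n} {b : α} (hb : b ≠ a i)
    (j : Fin n) : deviator (Function.update a i b) a j = i := by
  have h : ∃ i', Function.update a i b i' ≠ a i' := ⟨i, by simpa using hb⟩
  rw [deviator, dif_pos h]
  by_contra hne
  exact h.choose_spec (Function.update_of_ne hne _ _)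

/-- `P s i` is meant to be an optimal punishing profile against `i` from `s`. After a deviation
that is not unilateral, which no single deviating player can cause, whom `j` punishes is
irrelevant. -/
noncomputable def followOrPunish (ρ : G.Play) (P : G.State → Fin n → Fin n → G.Strategy)
    (j : Fin n) : G.Strategy := fun h =>
  if hd : ∃ p, LeavesAt ρ h p then
    P (G.update hd.choose.2.1.1 hd.choose.2.1.2) (deviator hd.choose.2.1.2 (ρ hd.choose.1).2 j) j
      hd.choose.2.2
  else (ρ h.length).2 j

section followOrPunish

variable {ρ : G.Play} {P : G.State → Fin n → Fin n → G.Strategy}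

theorem followOrPunish_hist (ρ : G.Play) (P : G.State → Fin n → Fin n → G.Strategy)
    (k : ℕ) :
    jointAction (followOrPunish ρ P) (hist ρ k) = (ρ k).2 := by
  funext j
  simp only [jointAction, followOrPunish, dif_neg (not_exists.2 (not_leavesAt_hist ρ k)),
    length_hist]

theorem followsUpTo_followOrPunish (ρ : G.Play) (P : G.State → Fin n → Fin n → G.Strategy)
    (k : ℕ) : FollowsUpTo (followOrPunish ρ P) ρ k :=
  fun m _ => followOrPunish_hist ρ P m

theorem outcome_followOrPunish {s₀ : G.State} (hρ : G.IsPlay ρ) (hρ0 : (ρ 0).1 = s₀) :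
    G.outcome (followOrPunish ρ P) s₀ = ρ :=
  outcome_eq_of_forall_followsUpTo hρ hρ0 (followsUpTo_followOrPunish ρ P)

theorem followOrPunish_of_leavesAt {h : G.Hist}
    {p : ℕ × (G.State × (Fin n → G.Act)) × G.Hist} (hp : LeavesAt ρ h p) (j : Fin n) :
    followOrPunish ρ P j h =
      P (G.update p.2.1.1 p.2.1.2) (deviator p.2.1.2 (ρ p.1).2 j) j p.2.2 := by
  have hd : ∃ p, LeavesAt ρ h p := ⟨p, hp⟩
  rw [followOrPunish, dif_pos hd, hd.choose_spec.unique hp]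

theorem residual_followOrPunish {k : ℕ} {i : Fin n} {b : G.Act} (hb : b ≠ (ρ k).2 i) :
    residual (hist ρ k ++ [((ρ k).1, Function.update (ρ k).2 i b)]) ∘ followOrPunish ρ P =
      P (G.update (ρ k).1 (Function.update (ρ k).2 i b)) i := by
  funext j t
  have hp : LeavesAt ρ (hist ρ k ++ [((ρ k).1, Function.update (ρ k).2 i b)] ++ t)
      (k, ((ρ k).1, Function.update (ρ k).2 i b), t) :=
    ⟨by simp, fun h => hb (by simpa using congrArg (fun x => x.2 i) h)⟩
  simp only [Function.comp, residual, followOrPunish_of_leavesAt hp, deviator_update hb]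

theorem isStrategy_followOrPunish {s₀ : G.State} (hρ : G.IsPlay ρ) (hρ0 : (ρ 0).1 = s₀)
    (hP : ∀ s i j, G.IsStrategy j s (P s i j)) (j : Fin n) :
    G.IsStrategy j s₀ (followOrPunish ρ P j) := fun h => by
  rcases eq_hist_or_leavesAt ρ h with hh | ⟨⟨m, x, t⟩, hh, hx⟩
  · have hs := lastState_hist hρ hρ0 h.length
    rw [← hh] at hs
    have hd : ¬ ∃ p, LeavesAt ρ h p :=
      fun ⟨p, hp⟩ => not_leavesAt_hist ρ h.length p (hh ▸ hp)
    rw [followOrPunish, dif_neg hd, hs]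
    exact (hρ h.length).1 j
  · rw [followOrPunish_of_leavesAt ⟨hh, hx⟩, hh, ← List.singleton_append,
      ← List.append_assoc, lastState_append, lastState_append_singleton]
    exact hP _ _ _ _

end followOrPunish

section NashEquilibrium

variable {tc : Fin n → G.State → (Fin n → G.Act) → ℕ} {tgt : Fin n → G.State → Prop}
  {s₀ : G.State} {ρ : G.Play}

theorem playCost_drop_le_of_isNE (hρ : G.IsPlay ρ) (hρ0 : (ρ 0).1 = s₀)
    {σ : Fin n → G.Strategy} (hNE : G.IsNE (fun i => G.playCost tc tgt i) σ s₀)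
    (hout : ∀ k, G.outcome σ s₀ k = ρ k) {i : Fin n} {k : ℕ} {b : G.Act}
    (hb : b ∈ G.allowed i (ρ k).1) (hnt : ∀ j ≤ k, ¬ tgt i (ρ j).1) :
    G.playCost tc tgt i (fun m => ρ (k + m)) ≤
      G.Val tc tgt i (G.update (ρ k).1 (Function.update (ρ k).2 i b)) +
        (tc i (ρ k).1 (Function.update (ρ k).2 i b) : ℕ∞) := by
  set a := Function.update (ρ k).2 i b
  set H := hist ρ k ++ [((ρ k).1, a)]
  have hσ := followsUpTo_of_outcome_eq hout
  have hH : G.lastState s₀ H = G.update (ρ k).1 a := lastState_append_singleton _ _ _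
  obtain ⟨τ', hτ', hτ'Val⟩ := exists_playCost_le_Val (tc := tc) (tgt := tgt)
    (fun j => hH ▸ isStrategy_residual (hNE.1 j) H) (hH ▸ isStrategy_residual (hNE.1 i) H)
  set τ := switchAt H (Function.update (σ i) (hist ρ k) b) τ'
  have hτ : G.IsStrategy i s₀ τ := isStrategy_switchAt
    ((hNE.1 i).update (by rwa [lastState_hist hρ hρ0])) (hH ▸ hτ')
  have hτ_before : ∀ m < k, τ (hist ρ m) = (ρ m).2 i := fun m hm => by
    have hpre : ¬ H <+: hist ρ m := fun h => by
      have := h.length_le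
      simp [H] at this
      omega
    have hne : hist ρ m ≠ hist ρ k := fun h => hm.ne (by simpa using congrArg List.length h)
    simp only [τ, switchAt_of_not_prefix hpre, Function.update_of_ne hne]
    exact congrFun (hσ (m + 1) m m.lt_succ_self) i
  have hτ_at : τ (hist ρ k) = b := by
    have hpre : ¬ H <+: hist ρ k := fun h => by simpa [H] using h.length_le
    simp only [τ, switchAt_of_not_prefix hpre, Function.update_self]
  have hπ : FollowsUpTo (Function.update σ i τ) ρ k := followsUpTo_update (hσ k) hτ_before
  have hact : jointAction (Function.update σ i τ) (hist ρ k) = a := by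
    rw [jointAction_update, hσ (k + 1) k k.lt_succ_self, hτ_at]
  have hdev : G.playCost tc tgt i (G.outcome σ s₀) ≤
      G.playCost tc tgt i (G.outcome (Function.update σ i τ) s₀) := hNE.2 i τ hτ
  rw [funext hout, playCost_eq_sum_add ρ k fun j hj => hnt j hj.le,
    playCost_outcome_of_followsUpTo hρ hρ0 hπ hnt, hact, Function.comp_update,
    residual_switchAt, add_assoc] at hdev
  refine (WithTop.add_le_add_iff_left (WithTop.coe_ne_top)).1 (hdev.trans ?_)
  rw [add_comm (G.Val _ _ _ _)]
  exact add_le_add le_rfl (add_le_add le_rfl hτ'Val)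

theorem isNE_followOrPunish (hρ : G.IsPlay ρ) (hρ0 : (ρ 0).1 = s₀)
    {P : G.State → Fin n → Fin n → G.Strategy} (hP : ∀ s i j, G.IsStrategy j s (P s i j))
    (hpunish : ∀ s i τ, G.IsStrategy i s τ →
      G.Val tc tgt i s ≤ G.playCost tc tgt i (G.outcome (Function.update (P s i) i τ) s))
    (hρcost : ∀ (i : Fin n) (k : ℕ) (b : G.Act), b ∈ G.allowed i (ρ k).1 →
      (∀ j ≤ k, ¬ tgt i (ρ j).1) →
      G.playCost tc tgt i (fun m => ρ (k + m)) ≤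
        G.Val tc tgt i (G.update (ρ k).1 (Function.update (ρ k).2 i b)) +
        (tc i (ρ k).1 (Function.update (ρ k).2 i b) : ℕ∞)) :
    G.IsNE (fun i => G.playCost tc tgt i) (followOrPunish ρ P) s₀ := by
  refine ⟨isStrategy_followOrPunish hρ hρ0 hP, fun i τ hτ => ?_⟩
  have hσ := followsUpTo_followOrPunish ρ P
  show G.playCost tc tgt i (G.outcome _ s₀) ≤ G.playCost tc tgt i (G.outcome _ s₀)
  rw [outcome_followOrPunish hρ hρ0]
  by_cases hdev : ∃ k, τ (hist ρ k) ≠ (ρ k).2 i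
  swap
  · push Not at hdev
    rw [outcome_eq_of_forall_followsUpTo hρ hρ0
      fun k => followsUpTo_update (hσ k) fun m _ => hdev m]
  set k := Nat.find hdev
  set b := τ (hist ρ k)
  have hb : b ≠ (ρ k).2 i := Nat.find_spec hdev
  have hπ : FollowsUpTo (Function.update (followOrPunish ρ P) i τ) ρ k :=
    followsUpTo_update (hσ k) fun m hm => not_not.1 (Nat.find_min hdev hm)
  have hact : jointAction (Function.update (followOrPunish ρ P) i τ) (hist ρ k) =
      Function.update (ρ k).2 i b := by
    rw [jointAction_update, followOrPunish_hist]
  by_cases hreach : ∃ j ≤ k, tgt i (ρ j).1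
  · refine (playCost_eq_of_agree (fun m hm => outcome_eq_of_followsUpTo_of_lt hρ hρ0 hπ hm)
      ?_ hreach).ge
    rw [outcome_eq_of_followsUpTo hρ hρ0 hπ le_rfl]
  push Not at hreach
  set H := hist ρ k ++ [((ρ k).1, Function.update (ρ k).2 i b)]
  have hH : G.lastState s₀ H = G.update (ρ k).1 (Function.update (ρ k).2 i b) :=
    lastState_append_singleton _ _ _
  have hb_allowed : b ∈ G.allowed i (ρ k).1 := lastState_hist hρ hρ0 k ▸ hτ (hist ρ k)
  rw [playCost_eq_sum_add ρ k fun j hj => hreach j hj.le,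
    playCost_outcome_of_followsUpTo hρ hρ0 hπ hreach, hact, Function.comp_update,
    residual_followOrPunish hb, add_assoc]
  refine add_le_add le_rfl ((hρcost i k b hb_allowed hreach).trans ?_)
  rw [add_comm]
  exact add_le_add le_rfl (hpunish _ i _ (hH ▸ isStrategy_residual hτ H))

end NashEquilibrium

/-- Characterization of outcomes of Nash equilibria in a (finite) concurrent
game with per-transition costs and target objectives. -/
theorem NE_outcome_characterization {n : ℕ} (G : CGame n)
    (tc : Fin n → G.State → (Fin n → G.Act) → ℕ)
    (tgt : Fin n → G.State → Prop) (s₀ : G.State)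
    (hpunish : ∀ (s : G.State) (i : Fin n), ∃ σ : Fin n → G.Strategy,
      (∀ j, G.IsStrategy j s (σ j)) ∧
      ∀ τ, G.IsStrategy i s τ →
        G.Val tc tgt i s ≤ G.playCost tc tgt i (G.outcome (Function.update σ i τ) s))
    (ρ : G.Play) (hρ : G.IsPlay ρ) (hρ0 : (ρ 0).1 = s₀) :
    (∃ σ : Fin n → G.Strategy,
        G.IsNE (fun i => G.playCost tc tgt i) σ s₀ ∧ ∀ k, G.outcome σ s₀ k = ρ k) ↔
    (∀ (i : Fin n) (k : ℕ) (b : G.Act), b ∈ G.allowed i (ρ k).1 →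
      (∀ j ≤ k, ¬ tgt i (ρ j).1) →
      G.playCost tc tgt i (fun m => ρ (k + m)) ≤
        G.Val tc tgt i (G.update (ρ k).1 (Function.update (ρ k).2 i b)) +
        (tc i (ρ k).1 (Function.update (ρ k).2 i b) : ℕ∞)) := by
  constructor
  · rintro ⟨σ, hNE, hout⟩ i k b hb hnt
    exact playCost_drop_le_of_isNE hρ hρ0 hNE hout hb hnt
  · intro hρcost
    choose P hP hPunish using hpunish
    exact ⟨followOrPunish ρ P, isNE_followOrPunish hρ hρ0 hP hPunish hρcost,
      congrFun (outcome_followOrPunish hρ hρ0)⟩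

end CGame
end

section
/- In an n-player concurrent game with nonnegative integer per-transition costs and target-reachability costs, for every state s and player i, the lower value Val_i(s) = sup over coalition strategies σ_{-i} of inf over player-i strategies σ_i of cost_i(outcome(σ_{-i},σ_i) from s) satisfies, for every valid action vector a at s: if ρ is a play from s whose first transition is (s, a, Update(s,a)) and ρ is the outcome of a Nash equilibrium, then for every allowed deviation b_i of player i at s (with player i not yet at target at s), cost_i(ρ) ≤ cost_i(s,(a_{-i},b_i),s') + Val_i(s') where s' = Update(s,(a_{-i},b_i)). -/
open scoped Classical

namespace CGame

variable {n : ℕ} {G : CGame n}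

lemma lastState_cons_aux (s : G.State) (p : G.State × (Fin n → G.Act)) (h : G.Hist) :
    G.lastState s (p :: h) = G.lastState (G.update p.1 p.2) h := by
  cases h with
  | nil => simp [lastState]
  | cons q t =>
    simp only [lastState, List.getLast?_cons_cons]
    cases hq : (q :: t).getLast? with
    | none => simp at hq
    | some x => rfl

lemma playCost_shift_aux (tc : Fin n → G.State → (Fin n → G.Act) → ℕ)
    (tgt : Fin n → G.State → Prop) (i : Fin n) (ρ : G.Play)
    (hnot : ¬ tgt i (ρ 0).1) :
    G.playCost tc tgt i ρ =
      (tc i (ρ 0).1 (ρ 0).2 : ℕ∞) + G.playCost tc tgt i (fun k => ρ (k + 1)) := by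
  unfold playCost
  by_cases h : ∃ k, tgt i (ρ k).1
  · have h' : ∃ k, tgt i ((fun k => ρ (k + 1)) k).1 := by
      obtain ⟨k, hk⟩ := h
      cases k with
      | zero => exact absurd hk hnot
      | succ m => exact ⟨m, hk⟩
    rw [dif_pos h, dif_pos h']
    have h2 := Nat.find_spec h
    have hne : Nat.find h ≠ 0 := fun h0 => hnot (h0 ▸ h2)
    obtain ⟨m, hm⟩ := Nat.exists_eq_succ_of_ne_zero hne
    have hfind : Nat.find h = Nat.find h' + 1 := by
      apply le_antisymm
      · exact Nat.find_le (Nat.find_spec h')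
      · rw [hm] at h2
        have hm2 : tgt i (ρ (m + 1)).1 := h2
        have : Nat.find h' ≤ m := Nat.find_le hm2
        omega
    rw [hfind, Finset.sum_range_succ']
    push_cast
    ring
  · have h' : ¬ ∃ k, tgt i ((fun k => ρ (k + 1)) k).1 := by
      rintro ⟨k, hk⟩
      exact h ⟨k + 1, hk⟩
    rw [dif_neg h, dif_neg h']
    simp

lemma run_shift_aux (π π' : Fin n → G.Strategy) (s : G.State) (a' : Fin n → G.Act)
    (hπ0 : ∀ j, π j [] = a' j)
    (hπ : ∀ j h, π j ((s, a') :: h) = π' j h) :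
    ∀ k, G.run π s (k + 1) =
      ((G.run π' (G.update s a') k).1, (s, a') :: (G.run π' (G.update s a') k).2) := by
  intro k
  induction k with
  | zero =>
    have ha : (fun j => π j []) = a' := funext hπ0
    simp [run, ha]
  | succ m ih =>
    have ha : (fun j => π j ((s, a') :: (G.run π' (G.update s a') m).2)) =
        fun j => π' j (G.run π' (G.update s a') m).2 := funext fun j => hπ j _
    show G.run π s (m + 1 + 1) = _
    rw [run, ih]
    simp [run, ha]

lemma outcome_shift_aux (π π' : Fin n → G.Strategy) (s : G.State) (a' : Fin n → G.Act)
    (hπ0 : ∀ j, π j [] = a' j)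
    (hπ : ∀ j h, π j ((s, a') :: h) = π' j h) :
    ∀ k, G.outcome π s (k + 1) = G.outcome π' (G.update s a') k := by
  intro k
  unfold outcome
  rw [run_shift_aux π π' s a' hπ0 hπ k]
  exact congrArg _ (funext fun j => hπ j _)

/-- One-step deviation bound for Nash-equilibrium outcomes: the cost of an
equilibrium outcome starting with action vector `a` at `s` is at most the cost
of deviating to `b` plus the lower value at the state reached. -/
theorem NE_one_step_deviation_bound {n : ℕ} (G : CGame n)
    (tc : Fin n → G.State → (Fin n → G.Act) → ℕ)
    (tgt : Fin n → G.State → Prop)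
    (s : G.State) (i : Fin n) (a : Fin n → G.Act)
    (ha : ∀ j, a j ∈ G.allowed j s)
    (ρ : G.Play) (hρ : G.IsPlay ρ) (hρ0 : ρ 0 = (s, a))
    (hNE : ∃ σ : Fin n → G.Strategy,
      G.IsNE (fun i' => G.playCost tc tgt i') σ s ∧ ∀ k, G.outcome σ s k = ρ k)
    (b : G.Act) (hb : b ∈ G.allowed i s) (hnotTgt : ¬ tgt i s) :
    G.playCost tc tgt i ρ ≤
      (tc i s (Function.update a i b) : ℕ∞) +
        G.Val tc tgt i (G.update s (Function.update a i b)) := by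
  classical
  obtain ⟨σ, ⟨hσval, hσNE⟩, hout⟩ := hNE
  set a' : Fin n → G.Act := Function.update a i b with ha'
  set s' : G.State := G.update s a' with hs'
  -- first actions of σ coincide with a
  have hσ0 : ∀ j, σ j [] = a j := by
    have h0 := hout 0
    rw [hρ0] at h0
    unfold outcome at h0
    have := congrArg Prod.snd h0
    simp only [run] at this
    exact fun j => congrFun this j
  -- coalition strategies after the deviation
  set σ' : Fin n → G.Strategy := fun j h => σ j ((s, a') :: h) with hσ'
  have hσ'val : ∀ j, G.IsStrategy j s' (σ' j) := by
    intro j h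
    have := hσval j ((s, a') :: h)
    rwa [lastState_cons_aux] at this
  have hVal : (⨅ (τ' : G.Strategy) (_ : G.IsStrategy i s' τ'),
      G.playCost tc tgt i (G.outcome (Function.update σ' i τ') s')) ≤
      G.Val tc tgt i s' := le_iSup₂ (f := fun σ'' (_ : ∀ j, G.IsStrategy j s' (σ'' j)) =>
        ⨅ (τ : G.Strategy) (_ : G.IsStrategy i s' τ),
          G.playCost tc tgt i (G.outcome (Function.update σ'' i τ) s')) σ' hσ'val
  rw [← tsub_le_iff_left]
  refine le_trans ?_ hVal
  refine le_iInf₂ fun τ' hτ' => ?_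
  rw [tsub_le_iff_left]
  -- build the deviating strategy from s
  set τ : G.Strategy := fun h => match h with
    | [] => b
    | p :: h' => if p = (s, a') then τ' h' else σ i (p :: h') with hτ
  have hτstrat : G.IsStrategy i s τ := by
    intro h
    cases h with
    | nil => simpa [hτ, lastState] using hb
    | cons p h' =>
      by_cases hp : p = (s, a')
      · subst hp
        have : τ ((s, a') :: h') = τ' h' := by simp [hτ]
        rw [this, lastState_cons_aux]
        exact hτ' h'
      · have : τ (p :: h') = σ i (p :: h') := by simp [hτ, hp]
        rw [this]
        exact hσval i (p :: h')
  set π : Fin n → G.Strategy := Function.update σ i τ with hπdef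
  set π' : Fin n → G.Strategy := Function.update σ' i τ' with hπ'def
  have hπ0 : ∀ j, π j [] = a' j := by
    intro j
    by_cases hj : j = i
    · subst hj; simp [hπdef, hτ, ha']
    · simp [hπdef, hj, ha', Function.update_of_ne hj, hσ0 j]
  have hπs : ∀ j h, π j ((s, a') :: h) = π' j h := by
    intro j h
    by_cases hj : j = i
    · subst hj; simp [hπdef, hπ'def, hτ]
    · simp [hπdef, hπ'def, hj, Function.update_of_ne hj, hσ']
  -- NE inequality
  have hρeq : G.outcome σ s = ρ := funext hout
  have hle : G.playCost tc tgt i ρ ≤ G.playCost tc tgt i (G.outcome π s) := by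
    rw [← hρeq]
    exact hσNE i τ hτstrat
  -- decompose the deviated outcome
  have h0 : G.outcome π s 0 = (s, a') := by
    unfold outcome
    simp only [run]
    exact Prod.ext rfl (funext hπ0)
  have hshift : (fun k => G.outcome π s (k + 1)) = G.outcome π' s' :=
    funext (outcome_shift_aux π π' s a' hπ0 hπs)
  have hsplit : G.playCost tc tgt i (G.outcome π s) =
      (tc i s a' : ℕ∞) + G.playCost tc tgt i (G.outcome π' s') := by
    rw [playCost_shift_aux tc tgt i (G.outcome π s) (by rw [h0]; exact hnotTgt), h0, hshift]
  exact hle.trans (le_of_eq hsplit)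

end CGame
end

section
/- In a symmetric timed network game, the map sending a timed configuration (c,d) together with the set W of players having already visited the target to the abstract configuration (P_A, P_W, d), where P_A(v) = #{i ∉ W : c(i) = v} and P_W(v) = #{i ∈ W : c(i) = v}, sends every concrete transition of the concurrent game to an edge of the abstract weighted graph, and the abstract edge weight equals the sum over players not in W of the concrete per-transition costs. -/
open scoped Classical

/-- A timed network: edges, guards (allowed dates per edge), and
weight functions (cost per time unit, as a function of the load). -/
structure Net (V : Type) where
  E : V → V → Prop
  guard : V → V → Set ℕ
  wgt : V → ℕ → ℕ

namespace SymTNG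

variable {V : Type} {n : ℕ}

/-- Load of a vertex: number of players sitting there. -/
noncomputable def load (c : Fin n → V) (v : V) : ℕ :=
  (Finset.univ.filter fun i => c i = v).card

/-- One valid step of a play of the symmetric timed network game, described by
configurations and dates: a nonempty set `M` of movers cross edges whose
guards are satisfied at the arrival date, the other players stay put. -/
def ValidStep (N : Net V) (conf : ℕ → Fin n → V) (date : ℕ → ℕ) (k : ℕ) : Prop :=
  date k < date (k+1) ∧
  ∃ M : Finset (Fin n), M.Nonempty ∧
    (∀ i ∈ M, N.E (conf k i) (conf (k+1) i) ∧
      date (k+1) ∈ N.guard (conf k i) (conf (k+1) i)) ∧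
    (∀ i ∉ M, conf (k+1) i = conf k i)

/-- An abstract configuration: number of active players in each vertex, number
of winning players in each vertex, and current date. -/
structure AbsConf (V : Type) where
  PA : V → ℕ
  PW : V → ℕ
  d : ℕ

variable [Fintype V]

/-- Edges of the abstract weighted graph of a symmetric timed network game
with `n` players and target `t`. -/
def AbsEdge (N : Net V) (n : ℕ) (t : V) (a₁ a₂ : AbsConf V) : Prop :=
  a₁.d < a₂.d ∧
  ∃ bA bW : V → V → ℕ,
    1 ≤ (∑ u : V, ∑ v : V, (bA u v + bW u v)) ∧
    (∑ u : V, ∑ v : V, (bA u v + bW u v)) ≤ n ∧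
    (∀ u v, 0 < bA u v + bW u v → N.E u v ∧ a₂.d ∈ N.guard u v) ∧
    (∀ v, (∑ v' : V, bA v v') ≤ a₁.PA v) ∧
    (∀ v, (∑ v' : V, bW v v') ≤ a₁.PW v) ∧
    a₂.PA t = 0 ∧
    (∀ v, v ≠ t → a₂.PA v + (∑ v' : V, bA v v') = a₁.PA v + ∑ v' : V, bA v' v) ∧
    (a₂.PW t + (∑ v' : V, bW t v') =
      a₁.PW t + ∑ v' : V, (bW v' t + bA v' t)) ∧
    (∀ v, v ≠ t → a₂.PW v + (∑ v' : V, bW v v') = a₁.PW v + ∑ v' : V, bW v' v)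

/-- Weight of an abstract edge: total cost incurred by the active players. -/
noncomputable def absW (N : Net V) (a₁ a₂ : AbsConf V) : ℕ :=
  ∑ v : V, a₁.PA v * N.wgt v (a₁.PA v + a₁.PW v) * (a₂.d - a₁.d)

/-- The initial abstract configuration: all `n` players active at `s`, time 0. -/
noncomputable def absInit (n : ℕ) (s : V) : AbsConf V :=
  ⟨fun v => if v = s then n else 0, fun _ => 0, 0⟩


/-- Abstraction of a timed configuration together with the set `W` of players
having already visited the target. -/
noncomputable def absOf (c : Fin n → V) (W : Finset (Fin n)) (d : ℕ) :
    AbsConf V :=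
  ⟨fun v => (Finset.univ.filter fun i => i ∉ W ∧ c i = v).card,
   fun v => (Finset.univ.filter fun i => i ∈ W ∧ c i = v).card, d⟩

lemma card_filter_iff (S : Finset (Fin n)) {p q : Fin n → Prop}
    [DecidablePred p] [DecidablePred q] (h : ∀ i ∈ S, p i ↔ q i) :
    (S.filter p).card = (S.filter q).card := by
  rw [Finset.filter_congr h]

lemma sum_card_fiber (S : Finset (Fin n)) (f : Fin n → V) (p : Fin n → Prop)
    (g : V → Fin n → Prop) [∀ v, DecidablePred (g v)] [DecidablePred p]
    (hg : ∀ i v, g v i ↔ p i ∧ f i = v) :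
    ∑ v : V, (S.filter (g v)).card = (S.filter p).card := by
  rw [Finset.card_eq_sum_card_fiberwise (f := f) (t := Finset.univ)
    (fun x _ => Finset.mem_univ _)]
  refine Finset.sum_congr rfl fun v _ => ?_
  rw [Finset.filter_filter]
  exact congrArg Finset.card (Finset.filter_congr fun i _ => hg i v)

lemma card_split_compl (M : Finset (Fin n)) (p : Fin n → Prop) [DecidablePred p] :
    (Finset.univ.filter p).card = (M.filter p).card + (Mᶜ.filter p).card := by
  rw [← Finset.card_union_of_disjoint
    (Finset.disjoint_filter_filter disjoint_compl_right),
    ← Finset.filter_union, Finset.union_compl]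

lemma card_filter_split (S : Finset (Fin n)) (p q : Fin n → Prop)
    [DecidablePred p] [DecidablePred q] :
    (S.filter p).card =
      (S.filter fun i => p i ∧ q i).card +
        (S.filter fun i => p i ∧ ¬ q i).card := by
  rw [← Finset.filter_filter, ← Finset.filter_filter,
    Finset.card_filter_add_card_filter_not]

/-- The abstraction map sends every concrete transition of the symmetric game
to an edge of the abstract weighted graph, and the abstract edge weight equals
the sum, over the players that had not yet visited the target, of the concrete
per-transition costs. -/
theorem abstraction_of_transition (N : Net V) (t : V)
    (c c' : Fin n → V) (d d' : ℕ) (W M : Finset (Fin n))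
    (hd : d < d') (hM : M.Nonempty)
    (hmove : ∀ i ∈ M, N.E (c i) (c' i) ∧ d' ∈ N.guard (c i) (c' i))
    (hstay : ∀ i ∉ M, c' i = c i)
    (hWt : ∀ i, c i = t → i ∈ W) :
    AbsEdge N n t (absOf c W d)
        (absOf c' (W ∪ Finset.univ.filter fun i => c' i = t) d') ∧
    absW N (absOf c W d)
        (absOf c' (W ∪ Finset.univ.filter fun i => c' i = t) d') =
      ∑ i ∈ Finset.univ.filter (fun i => i ∉ W),
        (d' - d) * N.wgt (c i) (load c (c i)) := by
  classical
  set W' : Finset (Fin n) := W ∪ Finset.univ.filter fun i => c' i = t with hW'def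
  -- row and column sums of the flow matrices
  have hArow : ∀ u : V,
      (∑ v : V, (M.filter fun i => i ∉ W ∧ c i = u ∧ c' i = v).card) =
        (M.filter fun i => i ∉ W ∧ c i = u).card := fun u =>
    sum_card_fiber M c' (fun i => i ∉ W ∧ c i = u) _ (fun i v => by tauto)
  have hWrow : ∀ u : V,
      (∑ v : V, (M.filter fun i => i ∈ W ∧ c i = u ∧ c' i = v).card) =
        (M.filter fun i => i ∈ W ∧ c i = u).card := fun u =>
    sum_card_fiber M c' (fun i => i ∈ W ∧ c i = u) _ (fun i v => by tauto)
  have hAcol : ∀ v : V,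
      (∑ u : V, (M.filter fun i => i ∉ W ∧ c i = u ∧ c' i = v).card) =
        (M.filter fun i => i ∉ W ∧ c' i = v).card := fun v =>
    sum_card_fiber M c (fun i => i ∉ W ∧ c' i = v) _ (fun i u => by tauto)
  have hWcol : ∀ v : V,
      (∑ u : V, (M.filter fun i => i ∈ W ∧ c i = u ∧ c' i = v).card) =
        (M.filter fun i => i ∈ W ∧ c' i = v).card := fun v =>
    sum_card_fiber M c (fun i => i ∈ W ∧ c' i = v) _ (fun i u => by tauto)
  -- the movers are counted exactly once in the flow matrices
  have htot :
      (∑ u : V, ∑ v : V,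
        ((M.filter fun i => i ∉ W ∧ c i = u ∧ c' i = v).card +
          (M.filter fun i => i ∈ W ∧ c i = u ∧ c' i = v).card)) = M.card := by
    calc (∑ u : V, ∑ v : V,
        ((M.filter fun i => i ∉ W ∧ c i = u ∧ c' i = v).card +
          (M.filter fun i => i ∈ W ∧ c i = u ∧ c' i = v).card))
        = ∑ u : V, ((M.filter fun i => i ∉ W ∧ c i = u).card +
            (M.filter fun i => i ∈ W ∧ c i = u).card) :=
          Finset.sum_congr rfl fun u _ => by
            rw [Finset.sum_add_distrib, hArow u, hWrow u]
      _ = (∑ u : V, (M.filter fun i => i ∉ W ∧ c i = u).card) +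
            ∑ u : V, (M.filter fun i => i ∈ W ∧ c i = u).card :=
          Finset.sum_add_distrib
      _ = (M.filter fun i => i ∉ W).card + (M.filter fun i => i ∈ W).card := by
          rw [sum_card_fiber M c (fun i => i ∉ W) _ (fun i u => Iff.rfl),
            sum_card_fiber M c (fun i => i ∈ W) _ (fun i u => Iff.rfl)]
      _ = M.card := by
          have := Finset.card_filter_add_card_filter_not
            (s := M) (p := fun i => i ∈ W)
          omega
  constructor
  · refine ⟨hd,
      (fun u v => (M.filter fun i => i ∉ W ∧ c i = u ∧ c' i = v).card),
      (fun u v => (M.filter fun i => i ∈ W ∧ c i = u ∧ c' i = v).card),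
      ?_, ?_, ?_, ?_, ?_, ?_, ?_, ?_, ?_⟩
    · rw [htot]; exact hM.card_pos
    · rw [htot]
      simpa using Finset.card_le_univ M
    · intro u v h
      beta_reduce at h
      have h' : 0 < (M.filter fun i => i ∉ W ∧ c i = u ∧ c' i = v).card ∨
          0 < (M.filter fun i => i ∈ W ∧ c i = u ∧ c' i = v).card := by omega
      obtain ⟨i, hi⟩ : ∃ i, i ∈ M ∧ c i = u ∧ c' i = v := by
        rcases h' with h' | h' <;>
          obtain ⟨i, hi⟩ := Finset.card_pos.mp h' <;>
          simp only [Finset.mem_filter] at hi <;>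
          exact ⟨i, hi.1, hi.2.2⟩
      obtain ⟨hiM, hcu, hcv⟩ := hi
      have := hmove i hiM
      rw [hcu, hcv] at this
      simpa [absOf] using this
    · intro v
      rw [hArow v]
      simp only [absOf]
      exact Finset.card_le_card
        (Finset.filter_subset_filter _ (Finset.subset_univ M))
    · intro v
      rw [hWrow v]
      simp only [absOf]
      exact Finset.card_le_card
        (Finset.filter_subset_filter _ (Finset.subset_univ M))
    · -- no active player at the target after the transition
      simp only [absOf, Finset.card_eq_zero, Finset.filter_eq_empty_iff]
      intro i _
      rintro ⟨h1, h2⟩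
      exact h1 (Finset.mem_union_right _ (Finset.mem_filter.mpr ⟨Finset.mem_univ _, h2⟩))
    · -- flow conservation for active players, v ≠ t
      intro v hv
      simp only [absOf]
      rw [hArow v, hAcol v]
      have h1 : (Finset.univ.filter fun i => i ∉ W' ∧ c' i = v).card =
          (Finset.univ.filter fun i => i ∉ W ∧ c' i = v).card := by
        refine card_filter_iff _ fun i _ => ?_
        simp only [hW'def, Finset.mem_union, Finset.mem_filter, Finset.mem_univ,
          true_and, not_or]
        exact ⟨fun ⟨⟨a, _⟩, b⟩ => ⟨a, b⟩,
          fun ⟨a, b⟩ => ⟨⟨a, fun h => hv (b.symm.trans h)⟩, b⟩⟩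
      have h2 := card_split_compl M (fun i => i ∉ W ∧ c' i = v)
      have h3 : (Mᶜ.filter fun i => i ∉ W ∧ c' i = v).card =
          (Mᶜ.filter fun i => i ∉ W ∧ c i = v).card :=
        card_filter_iff _ fun i hi => by rw [hstay i (Finset.mem_compl.mp hi)]
      have h4 := card_split_compl M (fun i => i ∉ W ∧ c i = v)
      omega
    · -- flow conservation for winning players at the target
      simp only [absOf]
      have hsum : (∑ v' : V,
          ((M.filter fun i => i ∈ W ∧ c i = v' ∧ c' i = t).card +
            (M.filter fun i => i ∉ W ∧ c i = v' ∧ c' i = t).card)) =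
          (M.filter fun i => i ∈ W ∧ c' i = t).card +
            (M.filter fun i => i ∉ W ∧ c' i = t).card := by
        rw [Finset.sum_add_distrib, hWcol t, hAcol t]
      rw [hsum, hWrow t]
      have h1 : (Finset.univ.filter fun i => i ∈ W' ∧ c' i = t).card =
          (Finset.univ.filter fun i => c' i = t).card := by
        refine card_filter_iff _ fun i _ => ?_
        exact ⟨fun h => h.2, fun h =>
          ⟨Finset.mem_union_right _ (Finset.mem_filter.mpr ⟨Finset.mem_univ _, h⟩), h⟩⟩
      have h2 := card_split_compl M (fun i => c' i = t)
      have h3 := card_filter_split M (fun i => c' i = t) (fun i => i ∈ W)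
      have h3a : (M.filter fun i => c' i = t ∧ i ∈ W).card =
          (M.filter fun i => i ∈ W ∧ c' i = t).card :=
        card_filter_iff _ fun i _ => and_comm
      have h3b : (M.filter fun i => c' i = t ∧ ¬ i ∈ W).card =
          (M.filter fun i => i ∉ W ∧ c' i = t).card :=
        card_filter_iff _ fun i _ => and_comm
      have h4 : (Mᶜ.filter fun i => c' i = t).card =
          (Mᶜ.filter fun i => i ∈ W ∧ c i = t).card := by
        refine card_filter_iff _ fun i hi => ?_
        rw [hstay i (Finset.mem_compl.mp hi)]
        exact ⟨fun h => ⟨hWt i h, h⟩, fun h => h.2⟩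
      have h5 := card_split_compl M (fun i => i ∈ W ∧ c i = t)
      omega
    · -- flow conservation for winning players, v ≠ t
      intro v hv
      simp only [absOf]
      rw [hWrow v, hWcol v]
      have h1 : (Finset.univ.filter fun i => i ∈ W' ∧ c' i = v).card =
          (Finset.univ.filter fun i => i ∈ W ∧ c' i = v).card := by
        refine card_filter_iff _ fun i _ => ?_
        simp only [hW'def, Finset.mem_union, Finset.mem_filter, Finset.mem_univ, true_and]
        exact ⟨fun ⟨a, b⟩ => ⟨a.resolve_right fun h => hv (b.symm.trans h), b⟩,
          fun ⟨a, b⟩ => ⟨Or.inl a, b⟩⟩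
      have h2 := card_split_compl M (fun i => i ∈ W ∧ c' i = v)
      have h3 : (Mᶜ.filter fun i => i ∈ W ∧ c' i = v).card =
          (Mᶜ.filter fun i => i ∈ W ∧ c i = v).card :=
        card_filter_iff _ fun i hi => by rw [hstay i (Finset.mem_compl.mp hi)]
      have h4 := card_split_compl M (fun i => i ∈ W ∧ c i = v)
      omega
  · -- the weight equality
    simp only [absW, absOf]
    rw [← Finset.sum_fiberwise' (Finset.univ.filter fun i => i ∉ W) c
      (fun v => (d' - d) * N.wgt v (load c v))]
    refine Finset.sum_congr rfl fun v _ => ?_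
    rw [Finset.sum_const, Finset.filter_filter, smul_eq_mul]
    have hload : load c v =
        (Finset.univ.filter fun i => i ∉ W ∧ c i = v).card +
          (Finset.univ.filter fun i => i ∈ W ∧ c i = v).card := by
      have hs := card_filter_split Finset.univ (fun i => c i = v) (fun i => i ∈ W)
      have e1 : (Finset.univ.filter fun i => c i = v ∧ i ∈ W).card =
          (Finset.univ.filter fun i => i ∈ W ∧ c i = v).card :=
        card_filter_iff _ fun i _ => and_comm
      have e2 : (Finset.univ.filter fun i => c i = v ∧ ¬ i ∈ W).card =
          (Finset.univ.filter fun i => i ∉ W ∧ c i = v).card :=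
        card_filter_iff _ fun i _ => and_comm
      simp only [load]
      omega
    rw [← hload]
    ring

end SymTNG
end
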